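/- arXiv:1306.3840 — 2 statements merged into one kernel-verified Lean document; each statement's English description precedes it below -/
import Mathlib

section
/- If γ : F₀(Y) → F₀(X) is a K-algebra isomorphism, then there exists a unique bijection h : X → Y such that γ(f) = f ∘ h for all f ∈ F₀(Y). -/
/-!
For each `x : X`, the map `f ↦ γ f x` is a nonzero multiplicative linear functional on `F₀(Y)`.
Such a functional `φ` is evaluation at a point: it does not vanish on some indicator `δ_y`, the
value `φ δ_y` is an idempotent of the domain `K` and hence `1`, and `f * δ_y = f y • δ_y` gives
`φ f = f y`. This defines `h`. Surjectivity of `γ` makes `h` injective, injectivity of `γ` makes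
it surjective (`γ δ_y ≠ 0` is nonzero at some `x`, forcing `h x = y`), and uniqueness holds
because the indicators separate the points of `Y`.
-/

namespace Finsupp

variable {K X Y : Type*}

theorem mul_single [MulZeroClass K] (f : Y →₀ K) (y : Y) (c : K) :
    f * single y c = single y (f y * c) := by
  ext z
  by_cases h : y = z <;> simp [h]

theorem isIdempotentElem_single_one [MulZeroOneClass K] (y : Y) :
    IsIdempotentElem (single y (1 : K)) := by
  rw [IsIdempotentElem, ← single_mul, mul_one]

theorem eq_of_forall_apply_eq [Zero K] [One K] [NeZero (1 : K)] {y y' : Y}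
    (h : ∀ f : Y →₀ K, f y = f y') : y = y' := by
  by_contra hne
  simpa [single_eq_of_ne' hne] using h (single y 1)

section Characters

variable [CommRing K]

def evalNonUnitalAlgHom (x : X) : (X →₀ K) →ₙₐ[K] K where
  toFun f := f x
  map_smul' _ _ := rfl
  map_zero' := rfl
  map_add' _ _ := rfl
  map_mul' _ _ := rfl

@[simp]
theorem evalNonUnitalAlgHom_apply (x : X) (f : X →₀ K) : evalNonUnitalAlgHom x f = f x := rfl

variable [IsDomain K]

theorem exists_eq_apply_of_ne_zero (φ : (Y →₀ K) →ₙₐ[K] K) (hφ : φ ≠ 0) :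
    ∃ y, ∀ f, φ f = f y := by
  obtain ⟨y, hy⟩ : ∃ y, φ (single y 1) ≠ 0 := by
    by_contra! h
    refine hφ (NonUnitalAlgHom.ext fun f => ?_)
    induction f using induction_linear with
    | zero => simp
    | add f g hf hg => simp [hf, hg]
    | single a b => rw [← smul_single_one, map_smul, h, smul_zero, NonUnitalAlgHom.zero_apply]
  have hφy : φ (single y 1) = 1 :=
    (IsIdempotentElem.iff_eq_zero_or_one.mp ((isIdempotentElem_single_one y).map φ)).resolve_left hy
  refine ⟨y, fun f => ?_⟩
  calc φ f = φ (f * single y 1) := by rw [map_mul, hφy, mul_one]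
    _ = φ (f y • single y 1) := by rw [mul_single, mul_one, smul_single_one]
    _ = f y := by rw [map_smul, hφy, smul_eq_mul, mul_one]

theorem exists_forall_apply_eq_comp_of_surjective (γ : (Y →₀ K) →ₙₐ[K] (X →₀ K))
    (hγ : Function.Surjective γ) : ∃ h : X → Y, ∀ f x, γ f x = f (h x) := by
  have hne (x : X) : (evalNonUnitalAlgHom x).comp γ ≠ 0 := fun h0 => by
    obtain ⟨f, hf⟩ := hγ (single x 1)
    simpa [hf] using congrArg (· f) h0
  choose h hh using fun x => exists_eq_apply_of_ne_zero _ (hne x)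
  exact ⟨h, fun f x => hh x f⟩

end Characters

section Pullback

variable [Zero K] [One K] [NeZero (1 : K)] {γ : (Y →₀ K) → (X →₀ K)} {h : X → Y}

theorem injective_of_forall_apply_eq_comp (hγ : Function.Surjective γ)
    (hγh : ∀ f x, γ f x = f (h x)) : Function.Injective h := fun a b hab =>
  eq_of_forall_apply_eq (K := K) fun g => by
    obtain ⟨f, rfl⟩ := hγ g
    rw [hγh, hγh, hab]

theorem surjective_of_forall_apply_eq_comp (hγ : Function.Injective γ)
    (hγh : ∀ f x, γ f x = f (h x)) : Function.Surjective h := fun y => by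
  have hγ0 : γ 0 = 0 := by ext x; simp [hγh]
  have hγy : γ (single y 1) ≠ 0 := hγ0 ▸ hγ.ne (single_ne_zero.mpr one_ne_zero)
  obtain ⟨x, hx⟩ := Finsupp.ne_iff.mp hγy
  rw [hγh, coe_zero, Pi.zero_apply, single_apply_ne_zero] at hx
  exact ⟨x, hx.1⟩

theorem eq_of_forall_apply_eq_comp {g : X → Y} (hγh : ∀ f x, γ f x = f (h x))
    (hγg : ∀ f x, γ f x = f (g x)) : h = g :=
  funext fun x => eq_of_forall_apply_eq (K := K) fun f => by rw [← hγh, hγg]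

end Pullback

end Finsupp

/-- If `γ : F₀(Y) → F₀(X)` is a `K`-algebra isomorphism, then there is a
unique bijection `h : X → Y` with `γ f = f ∘ h` for all `f ∈ F₀(Y)`. -/
theorem statement3 (K X Y : Type*) [Field K] (γ : (Y →₀ K) →ₙₐ[K] (X →₀ K))
    (hγ : Function.Bijective γ) :
    ∃! h : X → Y, Function.Bijective h ∧ ∀ (f : Y →₀ K) (x : X), γ f x = f (h x) := by
  obtain ⟨h, hγh⟩ := Finsupp.exists_forall_apply_eq_comp_of_surjective γ hγ.2
  have hh : Function.Bijective h :=
    ⟨Finsupp.injective_of_forall_apply_eq_comp hγ.2 hγh,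
      Finsupp.surjective_of_forall_apply_eq_comp hγ.1 hγh⟩
  exact ⟨h, ⟨hh, hγh⟩, fun g hg => (Finsupp.eq_of_forall_apply_eq_comp hγh hg.2).symm⟩
end

section
/- Let θ be a free partial action of a group G on a set X and α the induced partial action on F₀(X). Then the partial skew group ring F₀(X) ⋊_α G is isomorphic as a K-algebra to F₀(R) with the convolution product, via the map Γ sending fδ_t to the function (x,y) ↦ f(x) if y = h_{t⁻¹}(x) and 0 otherwise, extended linearly. -/
/-- A partial action `θ = ({X_t}, {h_t})` of a group `G` on a set `X`.
Each `h t` is modelled as a total function `X → X` whose behaviour is only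
constrained on the domain `Xt t⁻¹`; the axioms say that `h t` restricts to a
bijection from `Xt t⁻¹` onto `Xt t` (with inverse `h t⁻¹`) and that the usual
partial action axioms hold. -/
structure PartialAction (G X : Type*) [Group G] where
  /-- the domains `X_t` -/
  Xt : G → Set X
  /-- the partial bijections `h_t`, as total functions -/
  h : G → X → X
  Xt_one : Xt 1 = Set.univ
  h_one : ∀ x, h 1 x = x
  maps_to : ∀ t x, x ∈ Xt t⁻¹ → h t x ∈ Xt t
  h_inv : ∀ t x, x ∈ Xt t⁻¹ → h t⁻¹ (h t x) = x
  image_eq : ∀ t s, h t '' (Xt t⁻¹ ∩ Xt s) = Xt t ∩ Xt (t * s)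
  h_comp : ∀ t s x, x ∈ Xt s⁻¹ → x ∈ Xt (s⁻¹ * t⁻¹) → h t (h s x) = h (t * s) x

variable {G X : Type*} [Group G]

/-- A partial action is free if `h t x = x` for some `x ∈ X_{t⁻¹}` implies `t = e`. -/
def PartialAction.Free (pa : PartialAction G X) : Prop :=
  ∀ t x, x ∈ pa.Xt t⁻¹ → pa.h t x = x → t = 1

/-- The equivalence relation `R` associated to a partial action. -/
def PartialAction.Rel (pa : PartialAction G X) : Set (X × X) :=
  {p | ∃ t, p.1 ∈ pa.Xt t⁻¹ ∧ pa.h t p.1 = p.2}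

open Classical

variable {K : Type*} [Field K]

/-- The convolution product on `K`-valued functions on `X × X`:
`(f ∗ g)(x, z) = Σ_{s ∈ G, x ∈ X_{s⁻¹}} f(x, h_s x) · g(h_s x, z)`
(the sum is a `finsum`, hence well-defined; it is finite for finitely
supported functions on `R` when the action is free). -/
noncomputable def conv (pa : PartialAction G X) (f g : X × X → K) : X × X → K :=
  fun p => ∑ᶠ s ∈ {s : G | p.1 ∈ pa.Xt s⁻¹}, f (p.1, pa.h s p.1) * g (pa.h s p.1, p.2)

/-- Membership in `F₀(R)`: finitely supported functions `X × X → K`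
supported on the equivalence relation `R`. -/
def MemF0R (pa : PartialAction G X) (f : X × X → K) : Prop :=
  (Function.support f).Finite ∧ Function.support f ⊆ pa.Rel

/-- An element `Σ_t a_t δ_t` of the partial skew group ring `F₀(X) ⋊_α G`,
encoded as `a : G → X → K` (`a t x` is the value of the coefficient `a_t ∈ D_t`
at `x`): finitely many nonzero coefficients, each finitely supported and
supported in `X_t`. -/
def MemSkew (pa : PartialAction G X) (a : G → X → K) : Prop :=
  (Function.support a).Finite ∧
    ∀ t, (Function.support (a t)).Finite ∧ ∀ x, a t x ≠ 0 → x ∈ pa.Xt t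

/-- The product of the partial skew group ring `F₀(X) ⋊_α G`, determined by
`(a_t δ_t)(b_s δ_s) = α_t(α_{t⁻¹}(a_t) b_s) δ_{ts}` with `α_t(f) = f ∘ h_{t⁻¹}`;
pointwise it reads `(a ⋆ b)_r(x) = Σ_{t, x ∈ X_t} a_t(x) · b_{t⁻¹r}(h_{t⁻¹} x)`. -/
noncomputable def skewMul (pa : PartialAction G X) (a b : G → X → K) : G → X → K :=
  fun r x => ∑ᶠ t ∈ {t : G | x ∈ pa.Xt t}, a t x * b (t⁻¹ * r) (pa.h t⁻¹ x)

/-- The map `Γ : F₀(X) ⋊_α G → F₀(R)`, `Γ(Σ_t f_t δ_t)(x, y) = Σ_{t, y = h_{t⁻¹} x} f_t(x)`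
(for a single term: `Γ(f δ_t)(x,y) = f(x)` if `y = h_{t⁻¹}(x)`, else `0`). -/
noncomputable def Gam (pa : PartialAction G X) (a : G → X → K) : X × X → K :=
  fun p => ∑ᶠ t ∈ {t : G | p.1 ∈ pa.Xt t ∧ pa.h t⁻¹ p.1 = p.2}, a t p.1

/-- The single term `f δ_t` of the partial skew group ring. -/
noncomputable def single (t : G) (f : X → K) : G → X → K :=
  fun t' => if t' = t then f else 0


namespace PartialAction

variable {K : Type*} [Field K]

lemma mem_inv_of (pa : PartialAction G X) {t : G} {x : X} (ht : x ∈ pa.Xt t) :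
    pa.h t⁻¹ x ∈ pa.Xt t⁻¹ :=
  pa.maps_to t⁻¹ x (by rwa [inv_inv])

lemma h_h_inv (pa : PartialAction G X) {t : G} {x : X} (ht : x ∈ pa.Xt t) :
    pa.h t (pa.h t⁻¹ x) = x := by
  have := pa.h_inv t⁻¹ x (by rwa [inv_inv])
  rwa [inv_inv] at this

lemma uniq (pa : PartialAction G X) (hfree : pa.Free) {t s : G} {x : X}
    (ht : x ∈ pa.Xt t) (hs : x ∈ pa.Xt s) (he : pa.h t⁻¹ x = pa.h s⁻¹ x) : t = s := by
  set y := pa.h s⁻¹ x with hy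
  have hy1 : y ∈ pa.Xt s⁻¹ := pa.mem_inv_of hs
  have hy2 : y ∈ pa.Xt (s⁻¹ * t) := by
    have hm : pa.h s⁻¹ x ∈ pa.h s⁻¹ '' (pa.Xt s⁻¹⁻¹ ∩ pa.Xt t) :=
      Set.mem_image_of_mem _ ⟨by rwa [inv_inv], ht⟩
    rw [pa.image_eq s⁻¹ t] at hm
    exact hm.2
  have hsy : pa.h s y = x := pa.h_h_inv hs
  have hcomp : pa.h t⁻¹ (pa.h s y) = pa.h (t⁻¹ * s) y :=
    pa.h_comp t⁻¹ s y hy1 (by rwa [inv_inv])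
  rw [hsy, he] at hcomp
  have hmem : y ∈ pa.Xt (t⁻¹ * s)⁻¹ := by
    rw [mul_inv_rev, inv_inv]; exact hy2
  have h1 : t⁻¹ * s = 1 := hfree (t⁻¹ * s) y hmem hcomp.symm
  exact (inv_mul_eq_one.mp h1)

lemma Gam_eq (pa : PartialAction G X) (hfree : pa.Free) (a : G → X → K) {p : X × X} {t : G}
    (ht : p.1 ∈ pa.Xt t) (hy : pa.h t⁻¹ p.1 = p.2) : Gam pa a p = a t p.1 := by
  have hset : {s : G | p.1 ∈ pa.Xt s ∧ pa.h s⁻¹ p.1 = p.2} = {t} := by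
    ext s
    simp only [Set.mem_setOf_eq, Set.mem_singleton_iff]
    constructor
    · rintro ⟨hs, hys⟩
      exact pa.uniq hfree hs ht (by rw [hys, hy])
    · rintro rfl
      exact ⟨ht, hy⟩
  simp only [Gam]
  rw [hset, finsum_mem_singleton]

lemma Gam_eq_zero (pa : PartialAction G X) (a : G → X → K) {p : X × X}
    (hne : ¬ ∃ t, p.1 ∈ pa.Xt t ∧ pa.h t⁻¹ p.1 = p.2) : Gam pa a p = 0 := by
  have hset : {s : G | p.1 ∈ pa.Xt s ∧ pa.h s⁻¹ p.1 = p.2} = ∅ := by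
    ext s
    simp only [Set.mem_setOf_eq, Set.mem_empty_iff_false, iff_false, not_and]
    exact fun h1 h2 => hne ⟨s, h1, h2⟩
  simp only [Gam]
  rw [hset, finsum_mem_empty]

lemma Gam_ne_zero (pa : PartialAction G X) (a : G → X → K) {p : X × X}
    (h : Gam pa a p ≠ 0) : ∃ t, p.1 ∈ pa.Xt t ∧ pa.h t⁻¹ p.1 = p.2 := by
  by_contra hne
  exact h (pa.Gam_eq_zero a hne)

lemma step (pa : PartialAction G X) {x : X} {t r : G} (ht : x ∈ pa.Xt t) (hr : x ∈ pa.Xt r) :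
    pa.h t⁻¹ x ∈ pa.Xt (t⁻¹ * r) ∧ pa.h (t⁻¹ * r)⁻¹ (pa.h t⁻¹ x) = pa.h r⁻¹ x := by
  constructor
  · have hm : pa.h t⁻¹ x ∈ pa.h t⁻¹ '' (pa.Xt t⁻¹⁻¹ ∩ pa.Xt r) :=
      Set.mem_image_of_mem _ ⟨by rwa [inv_inv], hr⟩
    rw [pa.image_eq t⁻¹ r] at hm
    exact hm.2
  · have h1 : x ∈ pa.Xt t⁻¹⁻¹ := by rwa [inv_inv]
    have h2 : x ∈ pa.Xt (t⁻¹⁻¹ * ((t⁻¹ * r)⁻¹)⁻¹) := by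
      rw [show t⁻¹⁻¹ * ((t⁻¹ * r)⁻¹)⁻¹ = r by group]
      exact hr
    have key := pa.h_comp (t⁻¹ * r)⁻¹ t⁻¹ x h1 h2
    rw [show (t⁻¹ * r)⁻¹ * t⁻¹ = r⁻¹ by group] at key
    exact key

lemma step2 (pa : PartialAction G X) {x : X} {t s : G} (ht : x ∈ pa.Xt t)
    (hs : pa.h t⁻¹ x ∈ pa.Xt s) :
    x ∈ pa.Xt (t * s) ∧ pa.h (t * s)⁻¹ x = pa.h s⁻¹ (pa.h t⁻¹ x) := by
  have hts : x ∈ pa.Xt (t * s) := by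
    have hm : pa.h t (pa.h t⁻¹ x) ∈ pa.h t '' (pa.Xt t⁻¹ ∩ pa.Xt s) :=
      Set.mem_image_of_mem _ ⟨pa.mem_inv_of ht, hs⟩
    rw [pa.h_h_inv ht, pa.image_eq t s] at hm
    exact hm.2
  refine ⟨hts, ?_⟩
  have h1 : x ∈ pa.Xt t⁻¹⁻¹ := by rwa [inv_inv]
  have h2 : x ∈ pa.Xt (t⁻¹⁻¹ * (s⁻¹)⁻¹) := by
    rw [show t⁻¹⁻¹ * (s⁻¹)⁻¹ = t * s by group]
    exact hts
  have key := pa.h_comp s⁻¹ t⁻¹ x h1 h2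
  rw [show (t * s)⁻¹ = s⁻¹ * t⁻¹ by group]
  exact key.symm

end PartialAction

/-- For a free partial action `θ` of `G` on `X` with induced partial
action `α` on `F₀(X)`, the partial skew group ring `F₀(X) ⋊_α G` is isomorphic as a
`K`-algebra to `F₀(R)` with the convolution product, via the map `Γ`
(`Γ(fδ_t)(x,y) = f(x)` if `y = h_{t⁻¹} x`, else `0`, extended linearly): `Γ` is a
bijection from `F₀(X) ⋊_α G` onto `F₀(R)` which is additive, `K`-homogeneous and
multiplicative. -/
theorem statement11 (pa : PartialAction G X) (hfree : pa.Free) :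
    Set.BijOn (Gam pa) {a : G → X → K | MemSkew pa a} {f : X × X → K | MemF0R pa f} ∧
    (∀ a b : G → X → K, MemSkew pa a → MemSkew pa b →
      Gam pa (a + b) = Gam pa a + Gam pa b ∧
      Gam pa (skewMul pa a b) = conv pa (Gam pa a) (Gam pa b)) ∧
    (∀ (k : K) (a : G → X → K), MemSkew pa a → Gam pa (k • a) = k • Gam pa a) := by
  have hadd : ∀ a b : G → X → K, Gam pa (a + b) = Gam pa a + Gam pa b := by
    intro a b
    funext p
    by_cases hex : ∃ t, p.1 ∈ pa.Xt t ∧ pa.h t⁻¹ p.1 = p.2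
    · obtain ⟨t, ht, hy⟩ := hex
      rw [Pi.add_apply, pa.Gam_eq hfree (a + b) ht hy, pa.Gam_eq hfree a ht hy,
        pa.Gam_eq hfree b ht hy]
      rfl
    · rw [Pi.add_apply, pa.Gam_eq_zero (a + b) hex, pa.Gam_eq_zero a hex,
        pa.Gam_eq_zero b hex, add_zero]
  have hsmul : ∀ (k : K) (a : G → X → K), Gam pa (k • a) = k • Gam pa a := by
    intro k a
    funext p
    by_cases hex : ∃ t, p.1 ∈ pa.Xt t ∧ pa.h t⁻¹ p.1 = p.2
    · obtain ⟨t, ht, hy⟩ := hex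
      rw [Pi.smul_apply, pa.Gam_eq hfree (k • a) ht hy, pa.Gam_eq hfree a ht hy]
      rfl
    · rw [Pi.smul_apply, pa.Gam_eq_zero (k • a) hex, pa.Gam_eq_zero a hex, smul_zero]
  have hmul : ∀ a b : G → X → K,
      Gam pa (skewMul pa a b) = conv pa (Gam pa a) (Gam pa b) := by
    intro a b
    funext p
    by_cases hex : ∃ r, p.1 ∈ pa.Xt r ∧ pa.h r⁻¹ p.1 = p.2
    · obtain ⟨r, hr, hy⟩ := hex
      rw [pa.Gam_eq hfree (skewMul pa a b) hr hy]
      simp only [skewMul, conv]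
      apply finsum_mem_eq_of_bijOn (fun t : G => t⁻¹)
      · refine ⟨?_, ?_, ?_⟩
        · intro t ht
          simp only [Set.mem_setOf_eq, inv_inv]
          exact ht
        · intro t _ s _ hts
          exact inv_injective hts
        · intro s hs
          exact ⟨s⁻¹, by simpa using hs, by simp⟩
      · intro t ht
        have ht' : p.1 ∈ pa.Xt t := ht
        rw [pa.Gam_eq hfree a (p := (p.1, pa.h t⁻¹ p.1)) ht' rfl,
          pa.Gam_eq hfree b (p := (pa.h t⁻¹ p.1, p.2)) (pa.step ht' hr).1
            ((pa.step ht' hr).2.trans hy)]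
    · rw [pa.Gam_eq_zero (skewMul pa a b) hex]
      symm
      simp only [conv]
      apply finsum_mem_of_eqOn_zero
      intro s hs
      have hs' : p.1 ∈ pa.Xt s⁻¹ := hs
      show Gam pa a (p.1, pa.h s p.1) * Gam pa b (pa.h s p.1, p.2) = 0
      have hb0 : Gam pa b (pa.h s p.1, p.2) = 0 := by
        apply pa.Gam_eq_zero
        rintro ⟨t', h1, h2⟩
        have h1' : pa.h s⁻¹⁻¹ p.1 ∈ pa.Xt t' := by rwa [inv_inv]
        obtain ⟨hm, heq⟩ := pa.step2 hs' h1'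
        refine hex ⟨s⁻¹ * t', hm, ?_⟩
        rw [heq, inv_inv]
        exact h2
      rw [hb0, mul_zero]
  refine ⟨⟨?_, ?_, ?_⟩, fun a b _ _ => ⟨hadd a b, hmul a b⟩, fun k a _ => hsmul k a⟩
  · -- MapsTo
    intro a ha
    refine ⟨?_, ?_⟩
    · apply Set.Finite.subset
        (Set.Finite.biUnion ha.1
          (fun t _ => ((ha.2 t).1.image (fun x => (x, pa.h t⁻¹ x)))))
      intro p hp
      obtain ⟨t, ht, hy⟩ := pa.Gam_ne_zero a hp
      rw [Function.mem_support, pa.Gam_eq hfree a ht hy] at hp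
      refine Set.mem_biUnion
        (show t ∈ Function.support a from fun h0 => hp (by rw [h0]; rfl)) ?_
      refine ⟨p.1, hp, ?_⟩
      show (p.1, pa.h t⁻¹ p.1) = p
      rw [hy]
    · intro p hp
      obtain ⟨t, ht, hy⟩ := pa.Gam_ne_zero a hp
      exact ⟨t⁻¹, by rwa [inv_inv], hy⟩
  · -- InjOn
    intro a ha b hb hab
    funext t x
    by_cases hx : x ∈ pa.Xt t
    · have h1 : Gam pa a (x, pa.h t⁻¹ x) = a t x :=
        pa.Gam_eq hfree a (p := (x, pa.h t⁻¹ x)) hx rfl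
      have h2 : Gam pa b (x, pa.h t⁻¹ x) = b t x :=
        pa.Gam_eq hfree b (p := (x, pa.h t⁻¹ x)) hx rfl
      rw [← h1, ← h2, hab]
    · have e1 : a t x = 0 := not_not.mp (fun h => hx ((ha.2 t).2 x h))
      have e2 : b t x = 0 := not_not.mp (fun h => hx ((hb.2 t).2 x h))
      rw [e1, e2]
  · -- SurjOn
    intro f hf
    classical
    set a : G → X → K := fun t x => if x ∈ pa.Xt t then f (x, pa.h t⁻¹ x) else 0 with ha_def
    have hxt_of : ∀ t x, a t x ≠ 0 → x ∈ pa.Xt t := by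
      intro t x hx
      by_contra h
      exact hx (by simp [ha_def, h])
    have hfx_of : ∀ t x, a t x ≠ 0 → f (x, pa.h t⁻¹ x) ≠ 0 := by
      intro t x hx
      have := hxt_of t x hx
      simpa [ha_def, this] using hx
    refine ⟨a, ⟨?_, ?_⟩, ?_⟩
    · set T : X × X → G :=
        fun p => if h : ∃ t, p.1 ∈ pa.Xt t ∧ pa.h t⁻¹ p.1 = p.2 then h.choose else 1 with hT
      apply Set.Finite.subset (hf.1.image T)
      intro t ht
      obtain ⟨x, hx⟩ : ∃ x, a t x ≠ 0 := by
        by_contra h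
        push_neg at h
        exact ht (funext h)
      have hxt : x ∈ pa.Xt t := hxt_of t x hx
      refine ⟨(x, pa.h t⁻¹ x), hfx_of t x hx, ?_⟩
      have hex : ∃ s, ((x : X), pa.h t⁻¹ x).1 ∈ pa.Xt s ∧
          pa.h s⁻¹ ((x : X), pa.h t⁻¹ x).1 = ((x : X), pa.h t⁻¹ x).2 := ⟨t, hxt, rfl⟩
      simp only [hT, dif_pos hex]
      exact pa.uniq hfree hex.choose_spec.1 hxt hex.choose_spec.2
    · intro t
      refine ⟨?_, hxt_of t⟩
      apply Set.Finite.subset (hf.1.image Prod.fst)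
      intro x hx
      exact ⟨(x, pa.h t⁻¹ x), hfx_of t x hx, rfl⟩
    · funext p
      by_cases hex : ∃ t, p.1 ∈ pa.Xt t ∧ pa.h t⁻¹ p.1 = p.2
      · obtain ⟨t, ht, hy⟩ := hex
        rw [pa.Gam_eq hfree a ht hy]
        simp only [ha_def, if_pos ht]
        rw [hy]
      · rw [pa.Gam_eq_zero a hex]
        symm
        by_contra h
        obtain ⟨s, hs, hsx⟩ := hf.2 (Function.mem_support.mpr h)
        refine hex ⟨s⁻¹, hs, ?_⟩
        rw [inv_inv]
        exact hsx
end
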